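/- arXiv:math/0302120 — 3 statements merged into one kernel-verified Lean document; each statement's English description precedes it below -/
import Mathlib

section
/- The natural inclusion of Hol(K) into the symmetric group on the underlying set of K (generated by left translations and automorphisms) is an isomorphism if and only if K is isomorphic to the trivial group, Z/2, Z/3, or Z/2 ⊕ Z/2. -/
/-- The holomorph of a group `K` realized inside the symmetric group on the
underlying set of `K`: the subgroup generated by left translations (the image of
the Cayley embedding) and by the automorphisms of `K`. -/
def holPerm (K : Type*) [Group K] : Subgroup (Equiv.Perm K) :=
  Subgroup.closure
    ((Set.range fun x : K => Equiv.mulLeft x) ∪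
      (Set.range fun f : MulAut K => (f : K ≃ K)))

section Aux

variable {K : Type*} [Group K]

theorem holAux_mem_iff (σ : Equiv.Perm K) :
    σ ∈ holPerm K ↔
      ∃ (a : K) (f : MulAut K), σ = Equiv.mulLeft a * (f : K ≃ K) := by
  constructor
  · intro h
    refine Subgroup.closure_induction ?_ ?_ ?_ ?_ h
    · rintro x (⟨a, rfl⟩ | ⟨f, rfl⟩)
      · exact ⟨a, 1, by ext x; simp⟩
      · exact ⟨1, f, by ext x; simp⟩
    · exact ⟨1, 1, by ext x; simp⟩
    · rintro σ τ _ _ ⟨a, f, rfl⟩ ⟨b, g, rfl⟩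
      refine ⟨a * f b, f * g, ?_⟩
      ext x
      simp [mul_assoc]
    · rintro σ _ ⟨a, f, rfl⟩
      refine ⟨f⁻¹ a⁻¹, f⁻¹, ?_⟩
      rw [eq_comm, eq_inv_iff_mul_eq_one]
      ext x
      simp [mul_assoc]
  · rintro ⟨a, f, rfl⟩
    exact mul_mem (Subgroup.subset_closure (Or.inl ⟨a, rfl⟩))
      (Subgroup.subset_closure (Or.inr ⟨f, rfl⟩))

theorem holAux_eq_top_iff :
    holPerm K = ⊤ ↔
      ∀ σ : Equiv.Perm K, σ 1 = 1 → ∀ x y, σ (x * y) = σ x * σ y := by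
  constructor
  · intro h σ hσ
    obtain ⟨a, f, rfl⟩ := (holAux_mem_iff σ).1 (h ▸ Subgroup.mem_top σ)
    have ha : a = 1 := by simpa using hσ
    subst ha
    intro x y
    simp [map_mul]
  · intro h
    rw [eq_top_iff]
    intro σ _
    have hτ1 : (Equiv.mulLeft (σ 1)⁻¹ * σ) 1 = 1 := by simp
    have hmul := h _ hτ1
    refine (holAux_mem_iff σ).2 ⟨σ 1,
      ⟨(Equiv.mulLeft (σ 1)⁻¹ * σ), hmul⟩, ?_⟩
    ext x
    simp

theorem holAux_congr {K G : Type*} [Group K] [Group G] (e : K ≃* G)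
    (h : ∀ σ : Equiv.Perm G, σ 1 = 1 → ∀ x y, σ (x * y) = σ x * σ y) :
    ∀ σ : Equiv.Perm K, σ 1 = 1 → ∀ x y, σ (x * y) = σ x * σ y := by
  intro σ hσ x y
  set σ' : Equiv.Perm G := (e.symm.toEquiv.trans σ).trans e.toEquiv with hσ'
  have h1 : σ' 1 = 1 := by simp [hσ', hσ]
  have key := h σ' h1 (e x) (e y)
  simp only [hσ', Equiv.trans_apply, MulEquiv.coe_toEquiv, MulEquiv.coe_toEquiv_symm,
    ← map_mul, MulEquiv.symm_apply_apply] at key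
  exact e.injective (by simpa [map_mul] using key)

omit [Group K] in
theorem holAux_exists_not_mem [Finite K] (s : Finset K) (h : s.card < Nat.card K) :
    ∃ y : K, y ∉ s := by
  have := Fintype.ofFinite K
  by_contra hc
  push_neg at hc
  have : s = Finset.univ := Finset.eq_univ_iff_forall.2 hc
  rw [this, Finset.card_univ, ← Nat.card_eq_fintype_card] at h
  exact lt_irrefl _ h

omit [Group K] in
theorem holAux_card_le3 [DecidableEq K] (a b c : K) : ({a, b, c} : Finset K).card ≤ 3 := by
  calc ({a, b, c} : Finset K).card ≤ ({b, c} : Finset K).card + 1 := Finset.card_insert_le _ _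
    _ ≤ ({c} : Finset K).card + 2 := by
        have := Finset.card_insert_le b ({c} : Finset K); omega
    _ = 3 := by simp

omit [Group K] in
theorem holAux_card_le4 [DecidableEq K] (a b c d : K) :
    ({a, b, c, d} : Finset K).card ≤ 4 := by
  calc ({a, b, c, d} : Finset K).card ≤ ({b, c, d} : Finset K).card + 1 :=
        Finset.card_insert_le _ _
    _ ≤ 4 := by have := holAux_card_le3 b c d; omega

theorem holAux_orderOf_eq [Finite K]
    (H : ∀ σ : Equiv.Perm K, σ 1 = 1 → ∀ x y, σ (x * y) = σ x * σ y)
    {x y : K} (hx : x ≠ 1) (hy : y ≠ 1) : orderOf x = orderOf y := by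
  classical
  rcases eq_or_ne x y with rfl | hxy
  · rfl
  have hσ1 : (Equiv.swap x y) 1 = 1 := Equiv.swap_apply_of_ne_of_ne hx.symm hy.symm
  have hmul := H (Equiv.swap x y) hσ1
  let f : MulAut K := ⟨Equiv.swap x y, hmul⟩
  have : orderOf (f x) = orderOf x := orderOf_injective f.toMonoidHom f.injective x
  have hfx : f x = y := Equiv.swap_apply_left x y
  rw [hfx] at this
  exact this.symm

/-- A group of order 4 and exponent 2 is the Klein four group. -/
theorem holAux_klein [Finite K] (h4 : Nat.card K = 4)
    (hsq : ∀ x : K, x * x = 1) : Nonempty (K ≃* Multiplicative (ZMod 2 × ZMod 2)) := by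
  classical
  have := Fintype.ofFinite K
  have hinv : ∀ x : K, x⁻¹ = x := fun x => inv_eq_of_mul_eq_one_right (hsq x)
  have hcomm : ∀ x y : K, x * y = y * x := fun x y => by
    have h := (inv_eq_of_mul_eq_one_right (hsq (x * y))).symm
    rw [mul_inv_rev, hinv, hinv] at h
    exact h
  letI : CommGroup K := { (inferInstance : Group K) with mul_comm := hcomm }
  have hnt : Nontrivial K := Finite.one_lt_card_iff_nontrivial.mp (by omega)
  obtain ⟨g, hg⟩ := exists_ne (1 : K)
  obtain ⟨b, hb⟩ := holAux_exists_not_mem ({1, g} : Finset K) (by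
    have : ({1, g} : Finset K).card ≤ 2 := by
      have := Finset.card_insert_le (1 : K) ({g} : Finset K); simp at this; omega
    omega)
  simp only [Finset.mem_insert, Finset.mem_singleton, not_or] at hb
  obtain ⟨hb1, hbg⟩ := hb
  have hab1 : g * b ≠ 1 := by
    intro h
    have : b = g⁻¹ := eq_inv_of_mul_eq_one_left (by rw [mul_comm]; exact h)
    rw [hinv] at this
    exact hbg this
  have pow2 : ∀ (x : K) (m : ℕ), x ^ m = x ^ (m % 2) := by
    intro x m
    have hx2 : x ^ 2 = 1 := by rw [sq]; exact hsq x
    conv_lhs => rw [← Nat.div_add_mod m 2]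
    rw [pow_add, pow_mul, hx2, one_pow, one_mul]
  let φ : Multiplicative (ZMod 2 × ZMod 2) →* K :=
  { toFun := fun z => g ^ ((Multiplicative.toAdd z).1.val) * b ^ ((Multiplicative.toAdd z).2.val)
    map_one' := by simp
    map_mul' := by
      intro z w
      show g ^ (((Multiplicative.toAdd z).1 + (Multiplicative.toAdd w).1).val) *
          b ^ (((Multiplicative.toAdd z).2 + (Multiplicative.toAdd w).2).val) = _
      rw [ZMod.val_add, ZMod.val_add, ← pow2, ← pow2, pow_add, pow_add, mul_mul_mul_comm] }
  have henum : ∀ z : Multiplicative (ZMod 2 × ZMod 2),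
      z = Multiplicative.ofAdd (0, 0) ∨ z = Multiplicative.ofAdd (1, 0) ∨
      z = Multiplicative.ofAdd (0, 1) ∨ z = Multiplicative.ofAdd (1, 1) := by decide
  have hφinj : Function.Injective φ := by
    rw [injective_iff_map_eq_one]
    intro z hz
    rcases henum z with rfl | rfl | rfl | rfl
    · rfl
    · exfalso
      apply hg
      simpa [φ, show ((1 : ZMod 2)).val = 1 from rfl] using hz
    · exfalso
      apply hb1
      simpa [φ, show ((1 : ZMod 2)).val = 1 from rfl] using hz
    · exfalso
      apply hab1
      simpa [φ, show ((1 : ZMod 2)).val = 1 from rfl] using hz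
  have hbij : Function.Bijective φ := by
    rw [Fintype.bijective_iff_injective_and_card]
    refine ⟨hφinj, ?_⟩
    simp [← Nat.card_eq_fintype_card, h4]
  exact ⟨(MulEquiv.ofBijective φ hbij).symm⟩

end Aux

set_option maxRecDepth 100000 in
/-- The inclusion of `Hol(K)` into the symmetric group on the underlying set of
`K` is an isomorphism (i.e. `Hol(K)` is all of `S(K)`) if and only if `K` is
the trivial group, `ℤ/2`, `ℤ/3`, or `ℤ/2 ⊕ ℤ/2`. -/
theorem holPerm_eq_top_iff {K : Type*} [Group K] [Finite K] :
    holPerm K = ⊤ ↔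
      (Subsingleton K ∨ Nonempty (K ≃* Multiplicative (ZMod 2)) ∨
        Nonempty (K ≃* Multiplicative (ZMod 3)) ∨
        Nonempty (K ≃* Multiplicative (ZMod 2 × ZMod 2))) := by
  rw [holAux_eq_top_iff]
  constructor
  · intro H
    classical
    rcases subsingleton_or_nontrivial K with hs | hnt
    · exact Or.inl hs
    have := Fintype.ofFinite K
    obtain ⟨g, hg⟩ := exists_ne (1 : K)
    set p := orderOf g with hp
    have hord : ∀ x : K, x ≠ 1 → orderOf x = p := fun x hx => holAux_orderOf_eq H hx hg
    have hp0 : p ≠ 0 := (orderOf_pos g).ne'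
    have hp1 : 1 < p := by
      rcases Nat.lt_or_ge 1 p with h | h
      · exact h
      · interval_cases p
        · exact absurd rfl hp0
        · exact absurd (orderOf_eq_one_iff.1 hp.symm) hg
    have hpprime : p.Prime := by
      obtain ⟨q, hq, hqd⟩ := Nat.exists_prime_and_dvd hp1.ne'
      have h1 : orderOf (g ^ (p / q)) = q := orderOf_pow_orderOf_div hp0 hqd
      have hne : g ^ (p / q) ≠ 1 := by
        intro hcontra
        rw [hcontra, orderOf_one] at h1
        exact hq.one_lt.ne' h1.symm
      have h2 := hord _ hne
      rw [h1] at h2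
      rwa [← h2]
    have hpn : p ∣ Nat.card K := hp ▸ orderOf_dvd_natCard g
    have hn2 : 1 < Nat.card K := Finite.one_lt_card_iff_nontrivial.mpr hnt
    -- Case A : p odd implies card ≤ 3
    have caseA : 3 ≤ p → Nat.card K ≤ 3 := by
      intro hp3
      by_contra hcard
      push_neg at hcard
      have hgiv : g⁻¹ ≠ g := by
        intro hcontra
        have h2 : g ^ 2 = 1 := by
          rw [sq]
          nth_rewrite 1 [← hcontra]
          exact inv_mul_cancel g
        have hdvd : p ∣ 2 := hp ▸ orderOf_dvd_of_pow_eq_one h2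
        have := Nat.le_of_dvd (by norm_num) hdvd
        omega
      have hgiv1 : g⁻¹ ≠ 1 := inv_ne_one.mpr hg
      obtain ⟨y, hy⟩ := holAux_exists_not_mem ({1, g, g⁻¹} : Finset K)
        (lt_of_le_of_lt (holAux_card_le3 _ _ _) hcard)
      simp only [Finset.mem_insert, Finset.mem_singleton, not_or] at hy
      obtain ⟨hy1, hyg, hygi⟩ := hy
      have hσ1 : (Equiv.swap g y) 1 = 1 :=
        Equiv.swap_apply_of_ne_of_ne hg.symm (Ne.symm hy1)
      have hmul := H _ hσ1 g g⁻¹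
      rw [mul_inv_cancel, hσ1, Equiv.swap_apply_left,
        Equiv.swap_apply_of_ne_of_ne hgiv (fun h => hygi h.symm)] at hmul
      exact hyg (mul_inv_eq_one.mp hmul.symm)
    -- Case B : p = 2 implies card ≤ 4
    rcases eq_or_ne p 2 with hp2 | hpne2
    · -- exponent 2
      have hsq : ∀ x : K, x * x = 1 := by
        intro x
        rcases eq_or_ne x 1 with rfl | hx
        · simp
        · have h := pow_orderOf_eq_one x
          rw [hord x hx, hp2, sq] at h
          exact h
      have caseB : Nat.card K ≤ 4 := by
        by_contra hcard
        push_neg at hcard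
        obtain ⟨b, hb⟩ := holAux_exists_not_mem ({1, g} : Finset K) (by
          have : ({1, g} : Finset K).card ≤ 2 := by
            have := Finset.card_insert_le (1 : K) ({g} : Finset K)
            simp at this; omega
          omega)
        simp only [Finset.mem_insert, Finset.mem_singleton, not_or] at hb
        obtain ⟨hb1, hbg⟩ := hb
        have hinvg : g⁻¹ = g := inv_eq_of_mul_eq_one_right (hsq g)
        have hab1 : g * b ≠ 1 := by
          intro h
          have : g⁻¹ = b := inv_eq_of_mul_eq_one_right h
          rw [hinvg] at this
          exact hbg this.symm
        have habg : g * b ≠ g := fun h => hb1 (by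
          have : g * b = g * 1 := by rw [h, mul_one]
          exact mul_left_cancel this)
        have habb : g * b ≠ b := fun h => hg (by
          have : g * b = 1 * b := by rw [h, one_mul]
          exact mul_right_cancel this)
        obtain ⟨c, hc⟩ := holAux_exists_not_mem ({1, g, b, g * b} : Finset K)
          (lt_of_le_of_lt (holAux_card_le4 _ _ _ _) hcard)
        simp only [Finset.mem_insert, Finset.mem_singleton, not_or] at hc
        obtain ⟨hc1, hcg, hcb, hcab⟩ := hc
        have hσ1 : (Equiv.swap (g * b) c) 1 = 1 :=
          Equiv.swap_apply_of_ne_of_ne (Ne.symm hab1) (Ne.symm hc1)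
        have hmul := H _ hσ1 g b
        rw [Equiv.swap_apply_left,
          Equiv.swap_apply_of_ne_of_ne habg.symm (fun h => hcg h.symm),
          Equiv.swap_apply_of_ne_of_ne habb.symm (fun h => hcb h.symm)] at hmul
        exact hcab (hmul)
      -- card is 2 or 4
      have : Nat.card K = 2 ∨ Nat.card K = 4 := by
        rw [hp2] at hpn
        omega
      rcases this with hn | hn
      · haveI : Fact (Nat.Prime 2) := ⟨Nat.prime_two⟩
        haveI : IsCyclic K := isCyclic_of_prime_card hn
        haveI : IsCyclic (Multiplicative (ZMod 2)) := isCyclic_of_prime_card (p := 2) (by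
          simp [Nat.card_eq_fintype_card])
        refine Or.inr (Or.inl ⟨mulEquivOfCyclicCardEq ?_⟩)
        rw [hn, Nat.card_eq_fintype_card, Fintype.card_multiplicative, ZMod.card]
      · exact Or.inr (Or.inr (Or.inr (holAux_klein hn hsq)))
    · -- p odd prime, so p ≥ 3, card ≤ 3, card = 3
      have hp3 : 3 ≤ p := by
        have := hpprime.two_le
        omega
      have hle3 := caseA hp3
      have hple : p ≤ Nat.card K := Nat.le_of_dvd (by omega) hpn
      have hn3 : Nat.card K = 3 := by omega
      haveI : Fact (Nat.Prime 3) := ⟨Nat.prime_three⟩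
      haveI : IsCyclic K := isCyclic_of_prime_card hn3
      haveI : IsCyclic (Multiplicative (ZMod 3)) := isCyclic_of_prime_card (p := 3) (by
        simp [Nat.card_eq_fintype_card])
      refine Or.inr (Or.inr (Or.inl ⟨mulEquivOfCyclicCardEq ?_⟩))
      rw [hn3, Nat.card_eq_fintype_card, Fintype.card_multiplicative, ZMod.card]
  · rintro (hs | he | he | he)
    · intro σ hσ x y
      exact Subsingleton.elim _ _
    · exact holAux_congr he.some (by decide)
    · exact holAux_congr he.some (by decide)
    · exact holAux_congr he.some (by decide)
end

section
/- The subgroup of GL(n+1, F₂) stabilizing the first standard basis vector (isomorphic to Hol((Z/2)^n)) together with the permutation matrix swapping e₁ and e₂ generates all of GL(n+1, F₂); consequently this subgroup is a maximal subgroup of GL(n+1, F₂). -/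
/-!
Over `𝔽₂` the only nonzero scalar is `1`, so a nonzero vector is the same thing as a point of
projective space, and `fixE1` is the stabilizer of the point `[e₁]` for the action of
`GL(n+1, 𝔽₂)` on `ℙⁿ`. This action is 2-transitive, hence primitive, so its point stabilizers are
maximal subgroups. The swap moves `e₁`, so adjoining it to this maximal subgroup gives everything.
-/

open Matrix

/-- The subgroup of `GL(n+1, R)` stabilizing the first standard basis vector
`e₁` (matrices whose first column is `e₁`); it is isomorphic to `Hol(R^n)`. -/
def fixE1 (R : Type*) [CommRing R] (n : ℕ) : Subgroup (GL (Fin (n + 1)) R) where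
  carrier := {A | (A : Matrix (Fin (n + 1)) (Fin (n + 1)) R) *ᵥ Pi.single 0 1 =
    Pi.single 0 1}
  one_mem' := by
    show (1 : Matrix (Fin (n + 1)) (Fin (n + 1)) R) *ᵥ Pi.single 0 1 = Pi.single 0 1
    rw [Matrix.one_mulVec]
  mul_mem' := by
    intro a b ha hb
    simp only [Set.mem_setOf_eq, Units.val_mul] at *
    rw [← Matrix.mulVec_mulVec, hb, ha]
  inv_mem' := by
    intro a ha
    simp only [Set.mem_setOf_eq] at *
    conv_lhs => rw [← ha]
    rw [Matrix.mulVec_mulVec, ← Matrix.GeneralLinearGroup.coe_mul, inv_mul_cancel,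
      Matrix.GeneralLinearGroup.coe_one, Matrix.one_mulVec]

/-- The permutation matrix swapping `e₁` and `e₂`, as an element of
`GL(n+1, R)`. -/
def swapGL (R : Type*) [CommRing R] (n : ℕ) : GL (Fin (n + 1)) R :=
  ⟨((Equiv.swap (0 : Fin (n + 1)) 1).toPEquiv.toMatrix : Matrix (Fin (n + 1)) (Fin (n + 1)) R),
    ((Equiv.swap (0 : Fin (n + 1)) 1).toPEquiv.toMatrix : Matrix (Fin (n + 1)) (Fin (n + 1)) R),
    by
      rw [← PEquiv.toMatrix_trans, ← Equiv.toPEquiv_trans, Equiv.swap_swap,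
        Equiv.toPEquiv_refl, PEquiv.toMatrix_refl],
    by
      rw [← PEquiv.toMatrix_trans, ← Equiv.toPEquiv_trans, Equiv.swap_swap,
        Equiv.toPEquiv_refl, PEquiv.toMatrix_refl]⟩

open scoped LinearAlgebra.Projectivization

-- Inherited from `SL ι K`, which acts on `ℙ` through its inclusion into `GL ι K`.
instance Projectivization.isPreprimitive_generalLinearGroup {ι K : Type*} [Fintype ι]
    [DecidableEq ι] [Field K] : MulAction.IsPreprimitive (GL ι K) (ℙ K (ι → K)) :=
  MulAction.IsPreprimitive.of_surjective (φ := Matrix.SpecialLinearGroup.toGL)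
    (f := ⟨id, fun _ _ => rfl⟩) Function.surjective_id

theorem Projectivization.mk_eq_mk_iff_eq {K V : Type*} [DivisionRing K] [Subsingleton Kˣ]
    [AddCommGroup V] [Module K V] {v w : V} (hv : v ≠ 0) (hw : w ≠ 0) :
    mk K v hv = mk K w hw ↔ v = w := by
  rw [mk_eq_mk_iff]
  exact ⟨fun ⟨a, h⟩ => by rwa [Subsingleton.elim a 1, one_smul, eq_comm] at h,
    fun h => ⟨1, by rw [one_smul, h]⟩⟩

theorem Subgroup.closure_union_singleton_eq_top_of_isCoatom {G : Type*} [Group G]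
    {H : Subgroup G} (hH : IsCoatom H) {s : G} (hs : s ∉ H) :
    closure ((H : Set G) ∪ {s}) = ⊤ :=
  hH.lt_iff.mp <| SetLike.lt_iff_le_and_exists.mpr
    ⟨fun _ h => subset_closure (Or.inl h), s, subset_closure (Or.inr rfl), hs⟩

theorem fixE1_eq_stabilizer (K : Type*) [Field K] [Subsingleton Kˣ] (n : ℕ) :
    fixE1 K n = MulAction.stabilizer (GL (Fin (n + 1)) K)
      (Projectivization.mk K (Pi.single 0 1 : Fin (n + 1) → K)
        (Pi.single_ne_zero_iff.mpr one_ne_zero)) := by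
  ext g
  rw [MulAction.mem_stabilizer_iff, Projectivization.smul_mk, Projectivization.mk_eq_mk_iff_eq]
  rfl

theorem swapGL_mulVec {R : Type*} [CommRing R] {n : ℕ} (v : Fin (n + 1) → R) :
    (swapGL R n : Matrix (Fin (n + 1)) (Fin (n + 1)) R) *ᵥ v = v ∘ Equiv.swap 0 1 :=
  PEquiv.toMatrix_toPEquiv_mulVec _ v

theorem Pi.single_zero_ne_single_one (R : Type*) [MulZeroOneClass R] [Nontrivial R] (n : ℕ)
    [NeZero n] : (Pi.single 0 1 : Fin (n + 1) → R) ≠ Pi.single 1 1 := fun h => by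
  simpa [Fin.zero_ne_one'] using congrFun h 0

theorem swapGL_notMem_fixE1 (R : Type*) [CommRing R] [Nontrivial R] (n : ℕ) [NeZero n] :
    swapGL R n ∉ fixE1 R n := fun h => by
  simpa [Fin.zero_ne_one'] using congrFun ((swapGL_mulVec _).symm.trans h) 0

theorem isCoatom_fixE1 (K : Type*) [Field K] [Subsingleton Kˣ] (n : ℕ) [NeZero n] :
    IsCoatom (fixE1 K n) := by
  have hsingle (i : Fin (n + 1)) : (Pi.single i 1 : Fin (n + 1) → K) ≠ 0 :=
    Pi.single_ne_zero_iff.mpr one_ne_zero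
  have : Nontrivial (ℙ K (Fin (n + 1) → K)) :=
    nontrivial_of_ne (Projectivization.mk K _ (hsingle 0)) (Projectivization.mk K _ (hsingle 1))
      (by rw [Ne, Projectivization.mk_eq_mk_iff_eq]; exact Pi.single_zero_ne_single_one K n)
  rw [fixE1_eq_stabilizer]
  exact MulAction.IsPreprimitive.isCoatom_stabilizer_of_isPreprimitive _ _

/-- The stabilizer of `e₁` in `GL(n+1, 𝔽₂)` (which is isomorphic to
`Hol((ℤ/2)^n)`) together with the permutation matrix swapping `e₁` and `e₂`
generates all of `GL(n+1, 𝔽₂)`; consequently the stabilizer of `e₁` is a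
maximal subgroup of `GL(n+1, 𝔽₂)`. -/
theorem fixE1_maximal (n : ℕ) (hn : 1 ≤ n) :
    Subgroup.closure
        ((fixE1 (ZMod 2) n : Set (GL (Fin (n + 1)) (ZMod 2))) ∪ {swapGL (ZMod 2) n}) = ⊤ ∧
    IsCoatom (fixE1 (ZMod 2) n) := by
  have : NeZero n := ⟨by omega⟩
  exact ⟨Subgroup.closure_union_singleton_eq_top_of_isCoatom (isCoatom_fixE1 _ n)
    (swapGL_notMem_fixE1 _ n), isCoatom_fixE1 _ n⟩
end

section
/- Let p be an odd prime, k ≥ 1, and Γ the kernel of the reduction Hol((Z/p^{k+1})^n) → Hol((Z/p)^n), whose elements have the form (1 + pA, px). An element g = (1 + pA, px) of Γ satisfies g^p = 1 if and only if A ≡ p^{k−1}B and x ≡ p^{k−1}y mod p^{k+1} for some B, y, i.e., g lies in the kernel of Γ → Γ' where Γ' is the corresponding kernel at level k. Moreover the subgroup Ω₁(Γ) generated by elements of order dividing p is central in Γ. -/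
open Matrix

def glMulAut (R : Type*) [CommRing R] (n : ℕ) :
    GL (Fin n) R →* MulAut (Multiplicative (Fin n → R)) where
  toFun M := AddEquiv.toMultiplicative
    { toFun := fun v => (M : Matrix (Fin n) (Fin n) R) *ᵥ v
      invFun := fun v => ((M⁻¹ : GL (Fin n) R) : Matrix (Fin n) (Fin n) R) *ᵥ v
      left_inv := fun v => by
        dsimp only
        rw [Matrix.mulVec_mulVec, ← Matrix.GeneralLinearGroup.coe_mul, inv_mul_cancel,
          Matrix.GeneralLinearGroup.coe_one, Matrix.one_mulVec]
      right_inv := fun v => by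
        dsimp only
        rw [Matrix.mulVec_mulVec, ← Matrix.GeneralLinearGroup.coe_mul, mul_inv_cancel,
          Matrix.GeneralLinearGroup.coe_one, Matrix.one_mulVec]
      map_add' := fun v w => by
        exact Matrix.mulVec_add _ _ _ }
  map_one' := by
    ext v
    simp
  map_mul' M N := by
    ext v
    simp [Matrix.mulVec_mulVec]

abbrev HolV (R : Type*) [CommRing R] (n : ℕ) : Type _ :=
  Multiplicative (Fin n → R) ⋊[glMulAut R n] GL (Fin n) R

/-- The reduction homomorphism `Hol(R^n) → Hol(S^n)` induced by a ring
homomorphism `f : R → S`, acting entrywise on vectors and matrices. -/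
def holRed {R S : Type*} [CommRing R] [CommRing S] (f : R →+* S) (n : ℕ) :
    HolV R n →* HolV S n :=
  SemidirectProduct.map
    (AddMonoidHom.toMultiplicative (f.toAddMonoidHom.compLeft (Fin n)))
    (Matrix.GeneralLinearGroup.map f)
    (by
      intro M
      refine MonoidHom.ext fun v => ?_
      show (fun i => f (((M : Matrix (Fin n) (Fin n) R) *ᵥ (Multiplicative.toAdd v)) i)) =
        ((Matrix.GeneralLinearGroup.map f M : Matrix (Fin n) (Fin n) S) *ᵥ
          fun i => f (Multiplicative.toAdd v i))
      funext i
      rw [RingHom.map_mulVec f]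
      congr 1)

/-!
Write `g = (1 + pA, pz)`. Then `g ^ p = ((1 + pA) ^ p, S (pz))` with `S = ∑ i < p, (1 + pA) ^ i`,
and `(1 + pA) ^ p - 1 = S (pA)`. Since `p` is odd, `p ∣ p.choose 2`, so the binomial expansion
gives `S = p G` with `G ≡ 1` modulo the nilpotent `p`, hence a unit. Therefore `g ^ p = 1` iff
`p (pA) = 0` and `p (pz) = 0`, which over `ℤ/p^(k+1)` says that `g` reduces to `1` modulo `p^k`.
Two elements `(1 + D, v)` and `(1 + E, w)` commute once `DE = ED` and `Dw = Ev`; if `pD = 0` and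
`pv = 0` while `E` and `w` are divisible by `p`, all four terms vanish.
-/

open Finset Multiplicative

section GeomSum

variable {α : Type*} [Ring α]

theorem exists_one_add_pow_eq (X : α) (t : ℕ) :
    ∃ V : α, (1 + X) ^ t = 1 + t • X + X ^ 2 * V := by
  induction t with
  | zero => exact ⟨0, by simp⟩
  | succ t ih =>
    obtain ⟨V, hV⟩ := ih
    refine ⟨t • 1 + V + V * X, ?_⟩
    rw [pow_succ, hV]
    simp only [mul_add, add_mul, one_mul, mul_one, smul_mul_assoc, mul_smul_comm, sq,
      mul_assoc, succ_nsmul]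
    abel

theorem exists_geom_sum_one_add_eq (X : α) (t : ℕ) :
    ∃ W : α, ∑ i ∈ range t, (1 + X) ^ i = t • 1 + t.choose 2 • X + X ^ 2 * W := by
  induction t with
  | zero => exact ⟨0, by simp⟩
  | succ t ih =>
    obtain ⟨W, hW⟩ := ih
    obtain ⟨V, hV⟩ := exists_one_add_pow_eq X t
    refine ⟨W + V, ?_⟩
    rw [sum_range_succ, hW, hV, Nat.choose_succ_succ, Nat.choose_one_right]
    simp only [add_nsmul, succ_nsmul, mul_add]
    abel

theorem exists_isUnit_geom_sum_one_add_nsmul {p : ℕ} (hodd : Odd p) (hp : IsNilpotent (p : α))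
    (A : α) : ∃ G : α, IsUnit G ∧ ∑ i ∈ range p, (1 + p • A) ^ i = p • G := by
  obtain ⟨W, hW⟩ := exists_geom_sum_one_add_eq (p • A) p
  obtain ⟨t, ht⟩ := hodd
  have hchoose : p.choose 2 = p * t := by
    rw [Nat.choose_two_right, ht, Nat.add_sub_cancel,
      show (2 * t + 1) * (2 * t) = (2 * t + 1) * t * 2 by ring, Nat.mul_div_cancel _ two_pos]
  refine ⟨1 + p • (t • A + A * A * W), ?_, ?_⟩
  · refine IsNilpotent.isUnit_one_add ?_
    rw [nsmul_eq_mul]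
    exact (Nat.cast_commute _ _).isNilpotent_mul_right hp
  · rw [hW, hchoose]
    simp only [sq, smul_mul_assoc, mul_smul_comm, smul_add, mul_comm p t, mul_nsmul]
    rw [smul_comm t p A, add_assoc]

end GeomSum

namespace ZMod

theorem castHom_eq_zero_iff_dvd {N p : ℕ} [NeZero N] (hpN : p ∣ N) (a : ZMod N) :
    castHom hpN (ZMod p) a = 0 ↔ (p : ZMod N) ∣ a := by
  obtain ⟨m, rfl⟩ := natCast_zmod_surjective a
  refine ⟨fun h => ?_, fun ⟨b, hb⟩ => ?_⟩
  · rw [map_natCast, natCast_eq_zero_iff] at h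
    exact_mod_cast Nat.cast_dvd_cast (α := ZMod N) h
  · rw [hb, map_mul, map_natCast, natCast_self, zero_mul]

theorem castHom_pow_succ_eq_zero_iff {p k : ℕ} (hp : 0 < p) (a : ZMod (p ^ (k + 1))) :
    castHom (pow_dvd_pow p k.le_succ) (ZMod (p ^ k)) a = 0 ↔ p • a = 0 := by
  have : NeZero (p ^ (k + 1)) := ⟨pow_ne_zero _ hp.ne'⟩
  obtain ⟨m, rfl⟩ := natCast_zmod_surjective a
  rw [map_natCast, natCast_eq_zero_iff, nsmul_eq_mul, ← Nat.cast_mul, natCast_eq_zero_iff,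
    pow_succ', Nat.mul_dvd_mul_iff_left hp]

end ZMod

section

variable {R : Type*} [CommRing R] {n : ℕ}

namespace HolV

theorem toAdd_mul_left (g h : HolV R n) :
    toAdd (g * h).left = toAdd g.left + (g.right : Matrix (Fin n) (Fin n) R) *ᵥ toAdd h.left :=
  rfl

theorem pow_right (g : HolV R n) (t : ℕ) : (g ^ t).right = g.right ^ t :=
  map_pow SemidirectProduct.rightHom g t

theorem toAdd_pow_left (g : HolV R n) (t : ℕ) :
    toAdd (g ^ t).left =
      (∑ i ∈ range t, (g.right : Matrix (Fin n) (Fin n) R) ^ i) *ᵥ toAdd g.left := by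
  induction t with
  | zero => simp
  | succ t ih =>
    rw [pow_succ, toAdd_mul_left, ih, pow_right, sum_range_succ, add_mulVec,
      Units.val_pow_eq_pow_val]

theorem commute_of_sub_one_mulVec_eq {g h : HolV R n}
    (hM : Commute (g.right : Matrix (Fin n) (Fin n) R) h.right)
    (hv : ((g.right : Matrix (Fin n) (Fin n) R) - 1) *ᵥ toAdd h.left =
      ((h.right : Matrix (Fin n) (Fin n) R) - 1) *ᵥ toAdd g.left) :
    Commute g h := by
  refine SemidirectProduct.ext (toAdd.injective ?_) (Commute.units_val_iff.1 hM)
  rw [toAdd_mul_left, toAdd_mul_left]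
  simp only [sub_mulVec, one_mulVec, sub_eq_sub_iff_add_eq_add] at hv
  rw [add_comm, hv, add_comm]

theorem pow_eq_one_iff_of_sub_one_eq_nsmul {p : ℕ} (hodd : Odd p) (hp : IsNilpotent (p : R))
    {g : HolV R n} {A : Matrix (Fin n) (Fin n) R}
    (hA : (g.right : Matrix (Fin n) (Fin n) R) - 1 = p • A) :
    g ^ p = 1 ↔
      p • ((g.right : Matrix (Fin n) (Fin n) R) - 1) = 0 ∧ p • toAdd g.left = 0 := by
  have hp' : IsNilpotent (p : Matrix (Fin n) (Fin n) R) := by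
    simpa using hp.map (algebraMap R (Matrix (Fin n) (Fin n) R))
  obtain ⟨G, hG, hsum⟩ := exists_isUnit_geom_sum_one_add_nsmul hodd hp' A
  rw [← hA, add_sub_cancel] at hsum
  have hright : g.right ^ p = 1 ↔ p • ((g.right : Matrix (Fin n) (Fin n) R) - 1) = 0 := by
    rw [Units.ext_iff, Units.val_pow_eq_pow_val, Units.val_one, ← sub_eq_zero, ← geom_sum_mul,
      hsum, smul_mul_assoc, ← mul_smul_comm, hG.mul_right_eq_zero]
  have hleft : toAdd (g ^ p).left = 0 ↔ p • toAdd g.left = 0 := by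
    rw [toAdd_pow_left, hsum, smul_mulVec, ← mulVec_smul,
      (mulVec_injective_of_isUnit hG).eq_iff' (mulVec_zero G)]
  rw [SemidirectProduct.ext_iff, SemidirectProduct.one_left, SemidirectProduct.one_right,
    pow_right, ← toAdd_eq_zero, hleft, hright, and_comm]

theorem commute_of_nsmul {p : ℕ} {g h : HolV R n}
    (hgM : p • ((g.right : Matrix (Fin n) (Fin n) R) - 1) = 0) (hgv : p • toAdd g.left = 0)
    {C : Matrix (Fin n) (Fin n) R} (hC : (h.right : Matrix (Fin n) (Fin n) R) - 1 = p • C)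
    {z : Fin n → R} (hz : toAdd h.left = p • z) :
    Commute g h := by
  set D := (g.right : Matrix (Fin n) (Fin n) R) - 1
  have hDC : D * (p • C) = 0 := by rw [mul_smul_comm, ← smul_mul_assoc, hgM, zero_mul]
  have hCD : (p • C) * D = 0 := by rw [smul_mul_assoc, ← mul_smul_comm, hgM, mul_zero]
  refine commute_of_sub_one_mulVec_eq ?_ ?_
  · rw [← sub_add_cancel (g.right : Matrix (Fin n) (Fin n) R) 1,
      ← sub_add_cancel (h.right : Matrix (Fin n) (Fin n) R) 1, hC]
    have hDC' : Commute D (p • C) := hDC.trans hCD.symm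
    exact (hDC'.add_right (.one_right _)).add_left (.one_left _)
  · rw [hC, hz, mulVec_smul, ← smul_mulVec, hgM, smul_mulVec, ← mulVec_smul, hgv,
      zero_mulVec, mulVec_zero]

end HolV

theorem holRed_eq_one_iff {S : Type*} [CommRing S] (f : R →+* S) (g : HolV R n) :
    holRed f n g = 1 ↔
      (∀ i j, f (((g.right : Matrix (Fin n) (Fin n) R) - 1) i j) = 0) ∧
        ∀ i, f (toAdd g.left i) = 0 := by
  rw [SemidirectProduct.ext_iff, SemidirectProduct.one_left, SemidirectProduct.one_right,
    and_comm]
  refine and_congr ?_ ?_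
  · rw [holRed, SemidirectProduct.map_right, Units.ext_iff, ← Matrix.ext_iff]
    refine forall₂_congr fun i j => ?_
    simp [Matrix.one_apply, sub_eq_zero, apply_ite f]
  · rw [← toAdd_eq_zero, funext_iff]
    rfl

theorem exists_nsmul_of_mem_ker_holRed_castHom {N p : ℕ} [NeZero N] (hpN : p ∣ N)
    {g : HolV (ZMod N) n} (hg : g ∈ (holRed (ZMod.castHom hpN (ZMod p)) n).ker) :
    (∃ A, (g.right : Matrix (Fin n) (Fin n) (ZMod N)) - 1 = p • A) ∧
      ∃ z, toAdd g.left = p • z := by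
  rw [MonoidHom.mem_ker, holRed_eq_one_iff] at hg
  simp only [ZMod.castHom_eq_zero_iff_dvd] at hg
  choose A hA using hg.1
  choose z hz using hg.2
  exact ⟨⟨Matrix.of A, Matrix.ext fun i j => by simp [hA, nsmul_eq_mul]⟩,
    ⟨z, funext fun i => by simp [hz, nsmul_eq_mul]⟩⟩

theorem holRed_castHom_pow_eq_one_iff {p k : ℕ} (hp : 0 < p) (g : HolV (ZMod (p ^ (k + 1))) n) :
    holRed (ZMod.castHom (pow_dvd_pow p k.le_succ) (ZMod (p ^ k))) n g = 1 ↔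
      p • ((g.right : Matrix (Fin n) (Fin n) (ZMod (p ^ (k + 1)))) - 1) = 0 ∧
        p • toAdd g.left = 0 := by
  simp only [holRed_eq_one_iff, ZMod.castHom_pow_succ_eq_zero_iff hp, ← Matrix.ext_iff,
    funext_iff, Matrix.smul_apply, Pi.smul_apply, Matrix.zero_apply, Pi.zero_apply]

end

theorem pow_p_eq_one_iff_and_omega_central_general (p k n : ℕ) (hodd : Odd p) :
    (∀ g ∈ (holRed (ZMod.castHom (dvd_pow_self p (Nat.succ_ne_zero k)) (ZMod p)) n).ker,
        g ^ p = 1 ↔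
          holRed (ZMod.castHom (pow_dvd_pow p (Nat.le_succ k)) (ZMod (p ^ k))) n g = 1) ∧
    Subgroup.closure
        {g : ((holRed (ZMod.castHom (dvd_pow_self p (Nat.succ_ne_zero k)) (ZMod p)) n).ker :
            Subgroup (HolV (ZMod (p ^ (k + 1))) n)) | g ^ p = 1} ≤
      Subgroup.center
        ((holRed (ZMod.castHom (dvd_pow_self p (Nat.succ_ne_zero k)) (ZMod p)) n).ker :
          Subgroup (HolV (ZMod (p ^ (k + 1))) n)) := by
  have : NeZero (p ^ (k + 1)) := ⟨pow_ne_zero _ hodd.pos.ne'⟩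
  have hnil : IsNilpotent (p : ZMod (p ^ (k + 1))) :=
    ⟨k + 1, by rw [← Nat.cast_pow, ZMod.natCast_self]⟩
  refine ⟨fun g hg => ?_, ?_⟩
  · obtain ⟨⟨A, hA⟩, -⟩ := exists_nsmul_of_mem_ker_holRed_castHom _ hg
    rw [HolV.pow_eq_one_iff_of_sub_one_eq_nsmul hodd hnil hA,
      holRed_castHom_pow_eq_one_iff hodd.pos]
  · rw [Subgroup.closure_le]
    rintro ⟨g, hg⟩ (hgp : _ = 1)
    rw [SetLike.mem_coe, Subgroup.mem_center_iff]
    rintro ⟨h, hh⟩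
    obtain ⟨⟨A, hA⟩, -⟩ := exists_nsmul_of_mem_ker_holRed_castHom _ hg
    obtain ⟨hgM, hgv⟩ :=
      (HolV.pow_eq_one_iff_of_sub_one_eq_nsmul hodd hnil hA).1 (congrArg Subtype.val hgp)
    obtain ⟨⟨C, hC⟩, z, hz⟩ := exists_nsmul_of_mem_ker_holRed_castHom _ hh
    exact Subtype.ext (HolV.commute_of_nsmul hgM hgv hC hz).eq.symm

/-- Let `p` be an odd prime, `k ≥ 1`, and `Γ` the kernel of the reduction
`Hol((ℤ/p^(k+1))^n) → Hol((ℤ/p)^n)`.  An element `g` of `Γ` satisfies `g^p = 1`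
if and only if `g` lies in the kernel of the reduction
`Hol((ℤ/p^(k+1))^n) → Hol((ℤ/p^k)^n)` (i.e. `g` has the form `(1 + p^k B, p^k y)`).
Moreover the subgroup `Ω₁(Γ)` generated by the elements of order dividing `p`
is central in `Γ`. -/
theorem pow_p_eq_one_iff_and_omega_central (p k n : ℕ) (hp : p.Prime)
    (hodd : Odd p) (hk : 1 ≤ k) :
    (∀ g ∈ (holRed (ZMod.castHom (dvd_pow_self p (Nat.succ_ne_zero k)) (ZMod p)) n).ker,
        g ^ p = 1 ↔
          holRed (ZMod.castHom (pow_dvd_pow p (Nat.le_succ k)) (ZMod (p ^ k))) n g = 1) ∧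
    Subgroup.closure
        {g : ((holRed (ZMod.castHom (dvd_pow_self p (Nat.succ_ne_zero k)) (ZMod p)) n).ker :
            Subgroup (HolV (ZMod (p ^ (k + 1))) n)) | g ^ p = 1} ≤
      Subgroup.center
        ((holRed (ZMod.castHom (dvd_pow_self p (Nat.succ_ne_zero k)) (ZMod p)) n).ker :
          Subgroup (HolV (ZMod (p ^ (k + 1))) n)) :=
  pow_p_eq_one_iff_and_omega_central_general p k n hodd
end
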